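/- arXiv:2011.04361 — 2 statements merged into one kernel-verified Lean document; each statement's English description precedes it below -/
import Mathlib

section
/- If A = {x | F x ≤ g} is a polyhedron in ℝⁿ and B ⊆ ℝⁿ is compact, then A ⊖ B = {x | F x ≤ g - h} where the i-th entry of h is the support function hᵢ = sup_{y ∈ B} (Fᵢ · y), with Fᵢ the i-th row of F. -/
open Matrix

/-- Pontryagin difference: `A ⊖ B = {x | x + y ∈ A for all y ∈ B}`. -/
def pdiff {n : ℕ} (A B : Set (Fin n → ℝ)) : Set (Fin n → ℝ) :=
  {x | ∀ y ∈ B, x + y ∈ A}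

/-- If `A = {x | Fx ≤ g}` is a polyhedron and `B` is compact (and nonempty), then
`A ⊖ B = {x | Fx ≤ g - h}` where `hᵢ = sup_{y ∈ B} Fᵢ ⬝ y` is the support function of `B`
in the direction of the `i`-th row of `F`. -/
theorem pdiff_polyhedron {n m : ℕ} (F : Fin m → (Fin n → ℝ)) (g : Fin m → ℝ)
    (A B : Set (Fin n → ℝ)) (hA : A = {x | ∀ i, F i ⬝ᵥ x ≤ g i})
    (hBcomp : IsCompact B) (hBne : B.Nonempty)
    (h : Fin m → ℝ) (hh : ∀ i, h i = sSup ((fun y => F i ⬝ᵥ y) '' B)) :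
    pdiff A B = {x | ∀ i, F i ⬝ᵥ x ≤ g i - h i} := by
  have hcont : ∀ i, Continuous fun y : Fin n → ℝ => F i ⬝ᵥ y := by
    intro i
    unfold dotProduct
    exact continuous_finset_sum _ fun j _ => (continuous_const.mul (continuous_apply j))
  ext x
  subst hA
  simp only [pdiff, Set.mem_setOf_eq]
  constructor
  · intro hx i
    obtain ⟨y, hyB, hymax⟩ := hBcomp.exists_isMaxOn hBne ((hcont i).continuousOn)
    have hmem : F i ⬝ᵥ y ∈ (fun y => F i ⬝ᵥ y) '' B := ⟨y, hyB, rfl⟩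
    have hub : ∀ z ∈ (fun y => F i ⬝ᵥ y) '' B, z ≤ F i ⬝ᵥ y := by
      rintro z ⟨w, hw, rfl⟩; exact hymax hw
    have : h i = F i ⬝ᵥ y := by
      rw [hh i]
      exact le_antisymm (csSup_le ⟨_, hmem⟩ hub) (le_csSup ⟨_, hub⟩ hmem)
    have hxy := hx y hyB i
    rw [dotProduct_add] at hxy
    linarith
  · intro hx y hyB i
    have hbdd : BddAbove ((fun y => F i ⬝ᵥ y) '' B) :=
      (hBcomp.image (hcont i)).bddAbove
    have hle : F i ⬝ᵥ y ≤ h i := by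
      rw [hh i]; exact le_csSup hbdd ⟨y, hyB, rfl⟩
    rw [dotProduct_add]
    have := hx i
    linarith
end

section
/- Consider an interconnected system x = (x₁, ..., x_N) with subsystem dynamics xᵢ⁺ = fᵢ(xᵢ, uᵢ, yᵢ, d), where yᵢ collects the states of neighboring subsystems. Suppose each Sᵢ ⊆ ℝ^{nᵢ} satisfies: for every xᵢ ∈ Sᵢ there exists uᵢ ∈ Uᵢ such that fᵢ(xᵢ, uᵢ, yᵢ, d) ∈ Sᵢ for all yᵢ ∈ ∏_{j∈Nᵢ} Sⱼ and all d ∈ D. Then the product S = ∏ᵢ Sᵢ is a robust controlled-invariant set for the interconnected system with disturbance set D. -/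
/-- Compositional invariance: if each subsystem set `Sᵢ` admits, for every `xᵢ ∈ Sᵢ`, a
control `uᵢ ∈ Uᵢ` such that `fᵢ(xᵢ, uᵢ, yᵢ, d) ∈ Sᵢ` for all neighbor states
`yᵢ ∈ ∏_{j ∈ Nᵢ} Sⱼ` and all `d ∈ D`, then the product `S = ∏ᵢ Sᵢ` is a robust
controlled-invariant set for the interconnected system. -/
theorem product_of_subsystem_RCIs_is_RCI {N p : ℕ} (n m : Fin N → ℕ)
    (Nbr : Fin N → Set (Fin N))
    (f : (i : Fin N) → (Fin (n i) → ℝ) → (Fin (m i) → ℝ) →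
      ((j : Fin N) → j ∈ Nbr i → (Fin (n j) → ℝ)) → (Fin p → ℝ) → (Fin (n i) → ℝ))
    (U : (i : Fin N) → Set (Fin (m i) → ℝ)) (D : Set (Fin p → ℝ))
    (S : (i : Fin N) → Set (Fin (n i) → ℝ))
    (hS : ∀ i, ∀ xi ∈ S i, ∃ ui ∈ U i,
      ∀ y : (j : Fin N) → j ∈ Nbr i → (Fin (n j) → ℝ),
        (∀ j (hj : j ∈ Nbr i), y j hj ∈ S j) →
        ∀ d ∈ D, f i xi ui y d ∈ S i) :
    ∀ x : (j : Fin N) → (Fin (n j) → ℝ), (∀ i, x i ∈ S i) →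
      ∃ u : (i : Fin N) → (Fin (m i) → ℝ),
        (∀ i, u i ∈ U i) ∧
        ∀ d ∈ D, ∀ i, f i (x i) (u i) (fun j _ => x j) d ∈ S i := by
  intro x hx
  choose u hu hinv using fun i => hS i (x i) (hx i)
  exact ⟨u, hu, fun d hd i => hinv i _ (fun j _ => hx j) d hd⟩
end
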